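/- Define rational polynomials π_∅(t) = 1, π₁(t) = π₃(t) = t(t+1)(t+2)/6, π₂(t) = t(2t²+1)/3, π₁₃(t) = t²(5t²+1)/6, π₂₁₃₂(t) = t²(t²+5)/6, π₁₂₁(t) = π₂₃₂(t) = t³(t+1)(2t+1)/6, π₁₃₂₃₁(t) = t³(t²+2)/3, π₁₂₁₃₂₁(t) = t⁶. Then for every nonzero rational number t: t⁶·π_∅(1/t) = π₁₂₁₃₂₁(t), t⁶·π₁(1/t) = π₂₃₂(t), t⁶·π₂(1/t) = π₁₃₂₃₁(t), t⁶·π₃(1/t) = π₁₂₁(t), and t⁶·π₁₃(1/t) = π₂₁₃₂(t). -/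
import Mathlib

/-- `π_∅(t) = 1` -/
def piE (_ : ℚ) : ℚ := 1
/-- `π₁(t) = t(t+1)(t+2)/6` -/
def pi1 (t : ℚ) : ℚ := t * (t + 1) * (t + 2) / 6
/-- `π₂(t) = t(2t²+1)/3` -/
def pi2 (t : ℚ) : ℚ := t * (2 * t ^ 2 + 1) / 3
/-- `π₃(t) = t(t+1)(t+2)/6` -/
def pi3 (t : ℚ) : ℚ := t * (t + 1) * (t + 2) / 6
/-- `π₁₃(t) = t²(5t²+1)/6` -/
def pi13 (t : ℚ) : ℚ := t ^ 2 * (5 * t ^ 2 + 1) / 6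
/-- `π₂₁₃₂(t) = t²(t²+5)/6` -/
def pi2132 (t : ℚ) : ℚ := t ^ 2 * (t ^ 2 + 5) / 6
/-- `π₁₂₁(t) = t³(t+1)(2t+1)/6` -/
def pi121 (t : ℚ) : ℚ := t ^ 3 * (t + 1) * (2 * t + 1) / 6
/-- `π₂₃₂(t) = t³(t+1)(2t+1)/6` -/
def pi232 (t : ℚ) : ℚ := t ^ 3 * (t + 1) * (2 * t + 1) / 6
/-- `π₁₃₂₃₁(t) = t³(t²+2)/3` -/
def pi13231 (t : ℚ) : ℚ := t ^ 3 * (t ^ 2 + 2) / 3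
/-- `π₁₂₁₃₂₁(t) = t⁶` -/
def pi121321 (t : ℚ) : ℚ := t ^ 6

/-- The duality `t⁶·π_w(1/t) = π_{w̃}(t)` for the dimension polynomials of the `M_w`
in type `A₃`, with `∅ ↔ 121321`, `1 ↔ 232`, `2 ↔ 13231`, `3 ↔ 121`, `13 ↔ 2132`. -/
theorem stmt13 : ∀ t : ℚ, t ≠ 0 →
    t ^ 6 * piE (1 / t) = pi121321 t ∧
    t ^ 6 * pi1 (1 / t) = pi232 t ∧
    t ^ 6 * pi2 (1 / t) = pi13231 t ∧
    t ^ 6 * pi3 (1 / t) = pi121 t ∧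
    t ^ 6 * pi13 (1 / t) = pi2132 t := by
  intro t ht
  refine ⟨?_, ?_, ?_, ?_, ?_⟩ <;>
    simp only [piE, pi1, pi2, pi3, pi13, pi2132, pi121, pi232, pi13231, pi121321] <;>
    field_simp <;> ring
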